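/- arXiv:2008.04587 — 2 statements merged into one kernel-verified Lean document; each statement's English description precedes it below -/
import Mathlib

section
/- Let G be a bipartite graph. Then the critical independent sets of G coincide with the local maximum independent sets of G if and only if G has a perfect matching. -/
open Finset

variable {V : Type*}

namespace CrownPaper

variable [Fintype V] [DecidableEq V]

/-- The (open) neighborhood of a finite set of vertices. -/
def nbrs (G : SimpleGraph V) [DecidableRel G.Adj] (A : Finset V) : Finset V :=
  univ.filter (fun v => ∃ a ∈ A, G.Adj v a)

/-- The closed neighborhood `N[A] = A ∪ N(A)`. -/
def closedNbrs (G : SimpleGraph V) [DecidableRel G.Adj] (A : Finset V) : Finset V :=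
  A ∪ nbrs G A

/-- `S` is an independent set of `G`. -/
def IsIndep (G : SimpleGraph V) (S : Finset V) : Prop :=
  ∀ a ∈ S, ∀ b ∈ S, ¬ G.Adj a b

/-- The difference `d(S) = |S| - |N(S)|`. -/
def diff (G : SimpleGraph V) [DecidableRel G.Adj] (S : Finset V) : ℤ :=
  (S.card : ℤ) - ((nbrs G S).card : ℤ)

/-- `S` is a critical independent set. -/
def IsCritIndep (G : SimpleGraph V) [DecidableRel G.Adj] (S : Finset V) : Prop :=
  IsIndep G S ∧ ∀ I : Finset V, IsIndep G I → diff G I ≤ diff G S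

/-- `S` is a crown: an independent set with a matching from `N(S)` into `S`. -/
def IsCrown (G : SimpleGraph V) [DecidableRel G.Adj] (S : Finset V) : Prop :=
  IsIndep G S ∧ ∃ f : V → V, (∀ v ∈ nbrs G S, f v ∈ S ∧ G.Adj v (f v)) ∧
    Set.InjOn f (nbrs G S : Set V)

/-- `S` is a local maximum independent set: a maximum independent set of `G[N[S]]`. -/
def IsLocalMaxIndep (G : SimpleGraph V) [DecidableRel G.Adj] (S : Finset V) : Prop :=
  IsIndep G S ∧ ∀ I : Finset V, IsIndep G I → I ⊆ closedNbrs G S → I.card ≤ S.card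

/-- The independence number. -/
noncomputable def alpha (G : SimpleGraph V) : ℕ :=
  sSup {n | ∃ S : Finset V, IsIndep G S ∧ S.card = n}

/-- `M` is a matching of `G`, given as a finite set of (ordered) edges. -/
def IsMatching (G : SimpleGraph V) (M : Finset (V × V)) : Prop :=
  (∀ e ∈ M, G.Adj e.1 e.2) ∧
  ∀ e ∈ M, ∀ e' ∈ M, e ≠ e' →
    e.1 ≠ e'.1 ∧ e.1 ≠ e'.2 ∧ e.2 ≠ e'.1 ∧ e.2 ≠ e'.2

/-- The matching number. -/
noncomputable def mu (G : SimpleGraph V) : ℕ :=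
  sSup {n | ∃ M : Finset (V × V), IsMatching G M ∧ M.card = n}

/-- `G` has a perfect matching. -/
def HasPerfectMatching (G : SimpleGraph V) : Prop :=
  ∃ M : Finset (V × V), IsMatching G M ∧ ∀ v : V, ∃ e ∈ M, v = e.1 ∨ v = e.2

/-- `G` is a König–Egerváry graph: `α(G) + μ(G) = |V(G)|`. -/
def IsKonigEgervary (G : SimpleGraph V) : Prop :=
  alpha G + mu G = Fintype.card V

/-- `G` is bipartite. -/
def IsBipartite (G : SimpleGraph V) : Prop :=
  ∃ X : Set V, ∀ a b : V, G.Adj a b → (a ∈ X ↔ b ∉ X)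

end CrownPaper

open CrownPaper


section Aux

open CrownPaper

variable [Fintype V] [DecidableEq V]

lemma mem_nbrs' {G : SimpleGraph V} [DecidableRel G.Adj] {A : Finset V} {v : V} :
    v ∈ nbrs G A ↔ ∃ a ∈ A, G.Adj v a := by
  simp [nbrs]

lemma nbrs_empty' (G : SimpleGraph V) [DecidableRel G.Adj] :
    nbrs G (∅ : Finset V) = ∅ := by
  simp [nbrs]

lemma indep_empty' (G : SimpleGraph V) : IsIndep G (∅ : Finset V) := by
  intro a ha; simp at ha

lemma indep_subset' {G : SimpleGraph V} {S A : Finset V} (hS : IsIndep G S) (h : A ⊆ S) :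
    IsIndep G A := fun a ha b hb => hS a (h ha) b (h hb)

lemma not_mem_nbrs_of_indep' {G : SimpleGraph V} [DecidableRel G.Adj] {S : Finset V}
    (hS : IsIndep G S) {v : V} (hv : v ∈ S) : v ∉ nbrs G S := by
  intro h
  obtain ⟨a, ha, hadj⟩ := mem_nbrs'.mp h
  exact hS v hv a ha hadj

/-- From a perfect matching, extract the partner involution. -/
lemma exists_partner' {G : SimpleGraph V} (h : HasPerfectMatching G) :
    ∃ p : V → V, ∀ v, G.Adj v (p v) ∧ p (p v) = v := by
  obtain ⟨M, ⟨hadj, hdisj⟩, hcov⟩ := h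
  choose e he hve using hcov
  have huniq : ∀ v : V, ∀ e' ∈ M, (v = e'.1 ∨ v = e'.2) → e' = e v := by
    intro v e' he' hv
    by_contra hne
    obtain ⟨h1, h2, h3, h4⟩ := hdisj e' he' (e v) (he v) hne
    rcases hv with h | h <;> rcases hve v with h' | h'
    · exact h1 (h.symm.trans h')
    · exact h2 (h.symm.trans h')
    · exact h3 (h.symm.trans h')
    · exact h4 (h.symm.trans h')
  refine ⟨fun v => if v = (e v).1 then (e v).2 else (e v).1, fun v => ?_⟩
  have hne : (e v).1 ≠ (e v).2 := (hadj _ (he v)).ne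
  dsimp only
  rcases hve v with h | h
  · rw [if_pos h]
    constructor
    · have := hadj (e v) (he v)
      rwa [← h] at this
    · have hE : e ((e v).2) = e v := (huniq ((e v).2) (e v) (he v) (Or.inr rfl)).symm
      beta_reduce
      rw [hE]
      rw [if_neg (Ne.symm hne), ← h]
  · have hv1 : v ≠ (e v).1 := fun heq => hne (heq.symm.trans h)
    rw [if_neg hv1]
    constructor
    · have := (hadj (e v) (he v)).symm
      rwa [← h] at this
    · have hE : e ((e v).1) = e v := (huniq ((e v).1) (e v) (he v) (Or.inl rfl)).symm
      beta_reduce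
      rw [hE]
      rw [if_pos rfl, ← h]

lemma card_le_nbrs_of_pm' {G : SimpleGraph V} [DecidableRel G.Adj]
    (h : HasPerfectMatching G) (I : Finset V) : I.card ≤ (nbrs G I).card := by
  obtain ⟨p, hp⟩ := exists_partner' h
  apply Finset.card_le_card_of_injOn p
  · intro v hv
    exact mem_nbrs'.mpr ⟨v, hv, ((hp v).1).symm⟩
  · intro a _ b _ hab
    rw [← (hp a).2, hab, (hp b).2]

lemma diff_nonpos_of_pm' {G : SimpleGraph V} [DecidableRel G.Adj]
    (h : HasPerfectMatching G) (I : Finset V) : diff G I ≤ 0 := by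
  have := card_le_nbrs_of_pm' h I
  simp only [diff, sub_nonpos]
  exact_mod_cast this

lemma localmax_sub' {G : SimpleGraph V} [DecidableRel G.Adj] {S A : Finset V}
    (hS : IsLocalMaxIndep G S) (hA : IsIndep G A) (hAN : A ⊆ nbrs G S) :
    A.card ≤ (S ∩ nbrs G A).card := by
  set I : Finset V := (S \ nbrs G A) ∪ A with hI
  have hIindep : IsIndep G I := by
    intro u hu v hv hadj
    rw [hI, Finset.mem_union, Finset.mem_sdiff] at hu hv
    rcases hu with ⟨huS, huN⟩ | huA <;> rcases hv with ⟨hvS, hvN⟩ | hvA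
    · exact hS.1 u huS v hvS hadj
    · exact huN (mem_nbrs'.mpr ⟨v, hvA, hadj⟩)
    · exact hvN (mem_nbrs'.mpr ⟨u, huA, hadj.symm⟩)
    · exact hA u huA v hvA hadj
  have hIsub : I ⊆ closedNbrs G S := by
    intro v hv
    rw [hI, Finset.mem_union, Finset.mem_sdiff] at hv
    rcases hv with ⟨hvS, _⟩ | hvA
    · exact Finset.mem_union_left _ hvS
    · exact Finset.mem_union_right _ (hAN hvA)
  have hcard := hS.2 I hIindep hIsub
  have hdisj : Disjoint (S \ nbrs G A) A := by
    rw [Finset.disjoint_left]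
    intro v hv hvA
    exact not_mem_nbrs_of_indep' hS.1 (Finset.mem_sdiff.mp hv).1 (hAN hvA)
  rw [hI, Finset.card_union_of_disjoint hdisj] at hcard
  have h2 : (S \ nbrs G A).card + (S ∩ nbrs G A).card = S.card :=
    Finset.card_sdiff_add_card_inter S (nbrs G A)
  omega

lemma nbrs_le_of_localmax' {G : SimpleGraph V} [DecidableRel G.Adj]
    (hG : IsBipartite G) {S : Finset V} (hS : IsLocalMaxIndep G S) :
    (nbrs G S).card ≤ S.card := by
  classical
  obtain ⟨X, hX⟩ := hG
  set A1 : Finset V := (nbrs G S).filter (· ∈ X) with hA1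
  set A2 : Finset V := (nbrs G S).filter (· ∉ X) with hA2
  have hA1indep : IsIndep G A1 := by
    intro a ha b hb hadj
    rw [hA1, Finset.mem_filter] at ha hb
    exact ((hX a b hadj).mp ha.2) hb.2
  have hA2indep : IsIndep G A2 := by
    intro a ha b hb hadj
    rw [hA2, Finset.mem_filter] at ha hb
    exact ha.2 ((hX a b hadj).mpr hb.2)
  have h1 := localmax_sub' hS hA1indep (Finset.filter_subset _ _)
  have h2 := localmax_sub' hS hA2indep (Finset.filter_subset _ _)
  have hsub1 : S ∩ nbrs G A1 ⊆ S.filter (· ∉ X) := by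
    intro v hv
    rw [Finset.mem_inter] at hv
    obtain ⟨a, ha, hadj⟩ := mem_nbrs'.mp hv.2
    rw [hA1, Finset.mem_filter] at ha
    exact Finset.mem_filter.mpr ⟨hv.1, fun hvX => ((hX v a hadj).mp hvX) ha.2⟩
  have hsub2 : S ∩ nbrs G A2 ⊆ S.filter (· ∈ X) := by
    intro v hv
    rw [Finset.mem_inter] at hv
    obtain ⟨a, ha, hadj⟩ := mem_nbrs'.mp hv.2
    rw [hA2, Finset.mem_filter] at ha
    refine Finset.mem_filter.mpr ⟨hv.1, ?_⟩
    by_contra hvX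
    exact hvX ((hX v a hadj).mpr ha.2)
  have e1 : A1.card + A2.card = (nbrs G S).card :=
    Finset.card_filter_add_card_filter_not (fun v => v ∈ X)
  have e2 : (S.filter (· ∈ X)).card + (S.filter (· ∉ X)).card = S.card :=
    Finset.card_filter_add_card_filter_not (fun v => v ∈ X)
  have c1 := Finset.card_le_card hsub1
  have c2 := Finset.card_le_card hsub2
  omega

lemma crit_to_localmax' {G : SimpleGraph V} [DecidableRel G.Adj]
    (hpm : HasPerfectMatching G) {S : Finset V} (hS : IsCritIndep G S) :
    IsLocalMaxIndep G S := by
  obtain ⟨p, hp⟩ := exists_partner' hpm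
  have hdiff0 : diff G S = 0 := by
    have h1 := diff_nonpos_of_pm' hpm S
    have h2 := hS.2 ∅ (indep_empty' G)
    simp only [diff, nbrs_empty', Finset.card_empty, Nat.cast_zero, sub_zero, sub_self] at h2
    simp only [diff] at h1 ⊢
    omega
  have hcards : S.card = (nbrs G S).card := by
    simp only [diff, sub_eq_zero] at hdiff0
    exact_mod_cast hdiff0
  have hinj : Set.InjOn p S := by
    intro a _ b _ hab
    rw [← (hp a).2, hab, (hp b).2]
  have himg : S.image p = nbrs G S := by
    apply Finset.eq_of_subset_of_card_le
    · intro v hv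
      obtain ⟨s, hs, rfl⟩ := Finset.mem_image.mp hv
      exact mem_nbrs'.mpr ⟨s, hs, ((hp s).1).symm⟩
    · rw [Finset.card_image_of_injOn hinj, hcards]
  have hback : ∀ v ∈ nbrs G S, p v ∈ S := by
    intro v hv
    rw [← himg] at hv
    obtain ⟨s, hs, rfl⟩ := Finset.mem_image.mp hv
    rwa [(hp s).2]
  refine ⟨hS.1, fun I hI hIsub => ?_⟩
  apply Finset.card_le_card_of_injOn (fun v => if v ∈ S then v else p v)
  · intro v hv
    by_cases h : v ∈ S
    · simpa [h]
    · have hvN : v ∈ nbrs G S := by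
        rcases Finset.mem_union.mp (hIsub hv) with h' | h'
        · exact absurd h' h
        · exact h'
      simpa [h] using hback v hvN
  · intro u hu v hv huv
    by_cases h1 : u ∈ S <;> by_cases h2 : v ∈ S <;> simp [h1, h2] at huv
    · exact huv
    · exact absurd (huv ▸ (hp v).1.symm : G.Adj u v) fun hadj => hI u hu v hv hadj
    · exact absurd (huv ▸ (hp u).1 : G.Adj u v) fun hadj => hI u hu v hv hadj
    · rw [← (hp u).2, huv, (hp v).2]

lemma hall_inj' {G : SimpleGraph V} [DecidableRel G.Adj]
    (hall : ∀ I : Finset V, IsIndep G I → I.card ≤ (nbrs G I).card)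
    {A : Finset V} (hA : IsIndep G A) :
    ∃ f : V → V, (∀ x ∈ A, G.Adj x (f x)) ∧ Set.InjOn f A := by
  classical
  have hcond : ∀ s : Finset {x // x ∈ A},
      s.card ≤ (s.biUnion (fun x => univ.filter (fun u => G.Adj x.1 u))).card := by
    intro s
    set B : Finset V := s.image Subtype.val with hB
    have hBcard : B.card = s.card := Finset.card_image_of_injective _ Subtype.val_injective
    have hBsub : B ⊆ A := by
      intro v hv
      obtain ⟨x, _, rfl⟩ := Finset.mem_image.mp hv
      exact x.2
    have heq : s.biUnion (fun x => univ.filter (fun u => G.Adj x.1 u)) = nbrs G B := by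
      ext u
      simp only [Finset.mem_biUnion, Finset.mem_filter, Finset.mem_univ, true_and,
        mem_nbrs', hB, Finset.mem_image]
      constructor
      · rintro ⟨x, hx, hadj⟩
        exact ⟨x.1, ⟨x, hx, rfl⟩, hadj.symm⟩
      · rintro ⟨a, ⟨x, hx, rfl⟩, hadj⟩
        exact ⟨x, hx, hadj.symm⟩
    rw [heq, ← hBcard]
    exact hall B (indep_subset' hA hBsub)
  obtain ⟨f, hfinj, hf⟩ :=
    (Finset.all_card_le_biUnion_card_iff_exists_injective
      (fun x : {x // x ∈ A} => univ.filter (fun u => G.Adj x.1 u))).mp hcond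
  refine ⟨fun v => if h : v ∈ A then f ⟨v, h⟩ else v, ?_, ?_⟩
  · intro x hx
    have := hf ⟨x, hx⟩
    rw [Finset.mem_filter] at this
    simpa [hx] using this.2
  · intro a ha b hb hab
    simp only [Finset.mem_coe] at ha hb
    simp only [dif_pos ha, dif_pos hb] at hab
    exact congrArg Subtype.val (hfinj hab)

lemma pm_of_hall' {G : SimpleGraph V} [DecidableRel G.Adj] (hG : IsBipartite G)
    (hall : ∀ I : Finset V, IsIndep G I → I.card ≤ (nbrs G I).card) :
    HasPerfectMatching G := by
  classical
  obtain ⟨X, hX⟩ := hG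
  set Xf : Finset V := univ.filter (· ∈ X) with hXf
  set Yf : Finset V := univ.filter (· ∉ X) with hYf
  have hXmem : ∀ v, v ∈ Xf ↔ v ∈ X := by intro v; simp [hXf]
  have hYmem : ∀ v, v ∈ Yf ↔ v ∉ X := by intro v; simp [hYf]
  have hXindep : IsIndep G Xf := by
    intro a ha b hb hadj
    exact ((hX a b hadj).mp ((hXmem a).mp ha)) ((hXmem b).mp hb)
  have hYindep : IsIndep G Yf := by
    intro a ha b hb hadj
    exact ((hYmem a).mp ha) ((hX a b hadj).mpr ((hYmem b).mp hb))
  obtain ⟨f, hfadj, hfinj⟩ := hall_inj' hall hXindep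
  obtain ⟨g, hgadj, hginj⟩ := hall_inj' hall hYindep
  have hfY : ∀ x ∈ Xf, f x ∈ Yf := by
    intro x hx
    exact (hYmem _).mpr ((hX x (f x) (hfadj x hx)).mp ((hXmem x).mp hx))
  have hgX : ∀ y ∈ Yf, g y ∈ Xf := by
    intro y hy
    refine (hXmem _).mpr ?_
    have := hX (g y) y (hgadj y hy).symm
    exact this.mpr ((hYmem y).mp hy)
  have hle1 : Xf.card ≤ Yf.card := Finset.card_le_card_of_injOn f hfY hfinj
  have hle2 : Yf.card ≤ Xf.card := Finset.card_le_card_of_injOn g hgX hginj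
  have himg : Xf.image f = Yf := by
    apply Finset.eq_of_subset_of_card_le
    · intro v hv
      obtain ⟨x, hx, rfl⟩ := Finset.mem_image.mp hv
      exact hfY x hx
    · rw [Finset.card_image_of_injOn hfinj]; omega
  refine ⟨Xf.image (fun x => (x, f x)), ⟨?_, ?_⟩, ?_⟩
  · intro e he
    obtain ⟨x, hx, rfl⟩ := Finset.mem_image.mp he
    exact hfadj x hx
  · intro e he e' he' hne
    obtain ⟨x, hx, rfl⟩ := Finset.mem_image.mp he
    obtain ⟨x', hx', rfl⟩ := Finset.mem_image.mp he'
    have hxx : x ≠ x' := fun h => hne (by rw [h])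
    refine ⟨hxx, ?_, ?_, ?_⟩
    · intro h
      have hxf : x = f x' := h
      exact ((hYmem _).mp (hfY x' hx')) (hxf ▸ (hXmem x).mp hx)
    · intro h
      have hxf : f x = x' := h
      exact ((hYmem _).mp (hfY x hx)) (hxf.symm ▸ (hXmem x').mp hx')
    · intro h
      have hff : f x = f x' := h
      exact hxx (hfinj hx hx' hff)
  · intro v
    by_cases hv : v ∈ Xf
    · exact ⟨(v, f v), Finset.mem_image.mpr ⟨v, hv, rfl⟩, Or.inl rfl⟩
    · have hvY : v ∈ Yf := by
        rw [hYmem]; intro hvX; exact hv ((hXmem v).mpr hvX)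
      rw [← himg] at hvY
      obtain ⟨x, hx, hfx⟩ := Finset.mem_image.mp hvY
      exact ⟨(x, f x), Finset.mem_image.mpr ⟨x, hx, rfl⟩, Or.inr hfx.symm⟩

end Aux

theorem bipartite_crit_eq_psi_iff_pm (G : SimpleGraph V) [Fintype V] [DecidableEq V]
    [DecidableRel G.Adj] (hG : IsBipartite G) :
    (∀ S : Finset V, IsCritIndep G S ↔ IsLocalMaxIndep G S) ↔ HasPerfectMatching G := by
  constructor
  · intro h
    have hemp : IsLocalMaxIndep G ∅ := by
      refine ⟨indep_empty' G, fun I hI hsub => ?_⟩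
      have hIe : I ⊆ (∅ : Finset V) := by
        simpa [closedNbrs, nbrs_empty'] using hsub
      simp [Finset.subset_empty.mp hIe]
    have hcrit := (h ∅).mpr hemp
    have hall : ∀ I : Finset V, IsIndep G I → I.card ≤ (nbrs G I).card := by
      intro I hI
      have h2 := hcrit.2 I hI
      simp only [diff, nbrs_empty', Finset.card_empty, Nat.cast_zero, sub_zero, sub_self] at h2
      have := sub_nonpos.mp h2
      exact_mod_cast this
    exact pm_of_hall' hG hall
  · intro hpm S
    constructor
    · exact crit_to_localmax' hpm
    · intro hl
      refine ⟨hl.1, fun I hI => ?_⟩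
      have h1 := diff_nonpos_of_pm' hpm I
      have h2 : (0:ℤ) ≤ diff G S := by
        have h3 := nbrs_le_of_localmax' hG hl
        simp only [diff, sub_nonneg]
        exact_mod_cast h3
      exact h1.trans h2
end

section
/- If S₁ and S₂ are local maximum independent sets of G with N[S₁] ⊆ N[S₂], then there exists S₃ ⊆ S₂ − S₁ such that S₁ ∪ S₃ is a local maximum independent set of G and |S₁ ∪ S₃| = |S₂|. -/
open Finset

variable {V : Type*}

open CrownPaper

lemma nbrs_mono' (G : SimpleGraph V) [Fintype V] [DecidableEq V] [DecidableRel G.Adj]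
    {A B : Finset V} (h : A ⊆ B) : nbrs G A ⊆ nbrs G B := by
  intro v hv
  simp only [nbrs, mem_filter, mem_univ, true_and] at hv ⊢
  obtain ⟨a, ha, hadj⟩ := hv
  exact ⟨a, h ha, hadj⟩

lemma closedNbrs_mono' (G : SimpleGraph V) [Fintype V] [DecidableEq V] [DecidableRel G.Adj]
    {A B : Finset V} (h : A ⊆ B) : closedNbrs G A ⊆ closedNbrs G B :=
  union_subset_union h (nbrs_mono' G h)

theorem local_max_indep_augment (G : SimpleGraph V) [Fintype V] [DecidableEq V]
    [DecidableRel G.Adj] (S₁ S₂ : Finset V) (h₁ : IsLocalMaxIndep G S₁)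
    (h₂ : IsLocalMaxIndep G S₂) (hsub : closedNbrs G S₁ ⊆ closedNbrs G S₂) :
    ∃ S₃ : Finset V, S₃ ⊆ S₂ \ S₁ ∧ IsLocalMaxIndep G (S₁ ∪ S₃) ∧
      (S₁ ∪ S₃).card = S₂.card := by
  set S₃ : Finset V := S₂ \ closedNbrs G S₁ with hS₃
  have hsub1 : S₁ ⊆ closedNbrs G S₁ := subset_union_left
  -- S₃ ⊆ S₂ \ S₁
  have hsubS : S₃ ⊆ S₂ \ S₁ := by
    intro v hv
    rw [hS₃, mem_sdiff] at hv
    exact mem_sdiff.2 ⟨hv.1, fun h => hv.2 (hsub1 h)⟩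
  -- disjointness
  have hdisj : Disjoint S₁ S₃ := by
    exact Finset.disjoint_left.2 fun v hv hv' => (mem_sdiff.1 hv').2 (hsub1 hv)
  -- independence of S₁ ∪ S₃
  have hnotadj : ∀ a ∈ S₁, ∀ b ∈ S₃, ¬ G.Adj a b := by
    intro a ha b hb hadj
    rw [hS₃, mem_sdiff] at hb
    apply hb.2
    refine mem_union_right _ ?_
    simp only [nbrs, mem_filter, mem_univ, true_and]
    exact ⟨a, ha, hadj.symm⟩
  have hindep : IsIndep G (S₁ ∪ S₃) := by
    intro a ha b hb hadj
    rcases mem_union.1 ha with ha | ha <;> rcases mem_union.1 hb with hb | hb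
    · exact h₁.1 a ha b hb hadj
    · exact hnotadj a ha b hb hadj
    · exact hnotadj b hb a ha hadj.symm
    · exact h₂.1 a (mem_sdiff.1 ha).1 b (mem_sdiff.1 hb).1 hadj
  -- S₁ ∪ S₃ ⊆ N[S₂]
  have hinN2 : S₁ ∪ S₃ ⊆ closedNbrs G S₂ := by
    intro v hv
    rcases mem_union.1 hv with hv | hv
    · exact hsub (hsub1 hv)
    · exact mem_union_left _ (mem_sdiff.1 hv).1
  have hle1 : (S₁ ∪ S₃).card ≤ S₂.card := h₂.2 _ hindep hinN2
  -- A = S₂ ∩ N[S₁]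
  have hAindep : IsIndep G (S₂ ∩ closedNbrs G S₁) := fun a ha b hb =>
    h₂.1 a (mem_inter.1 ha).1 b (mem_inter.1 hb).1
  have hA : (S₂ ∩ closedNbrs G S₁).card ≤ S₁.card :=
    h₁.2 _ hAindep inter_subset_right
  have hsplit : (S₂ ∩ closedNbrs G S₁).card + S₃.card = S₂.card := by
    rw [hS₃]
    exact Finset.card_inter_add_card_sdiff S₂ (closedNbrs G S₁)
  have hcardU : (S₁ ∪ S₃).card = S₁.card + S₃.card := card_union_of_disjoint hdisj
  have hcard : (S₁ ∪ S₃).card = S₂.card := by omega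
  refine ⟨S₃, hsubS, ⟨hindep, ?_⟩, hcard⟩
  intro I hI hIsub
  rw [hcard]
  apply h₂.2 I hI
  refine hIsub.trans ?_
  -- N[S₁ ∪ S₃] ⊆ N[S₂]
  intro v hv
  rcases mem_union.1 hv with hv | hv
  · exact hinN2 hv
  · simp only [nbrs, mem_filter, mem_univ, true_and] at hv
    obtain ⟨a, ha, hadj⟩ := hv
    rcases mem_union.1 ha with ha | ha
    · exact hsub (mem_union_right _ (by
        simp only [nbrs, mem_filter, mem_univ, true_and]
        exact ⟨a, ha, hadj⟩))
    · exact mem_union_right _ (by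
        simp only [nbrs, mem_filter, mem_univ, true_and]
        exact ⟨a, (mem_sdiff.1 ha).1, hadj⟩)
end
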